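/- Let X be a countable crowded (i.e., without isolated points) topological space and fix a point x with a countable family 𝒜 of mutually disjoint sequences converging to x, each almost disjoint from a given family 𝒴 of convergent sequences none of which intersects infinitely many members of 𝒜. If X has character less than 𝔟, then there exists a sequence Y ⊆ ⋃𝒜 converging to x such that |Y ∩ A| = 1 for every A ∈ 𝒜. -/
import Mathlib


open Filter Set

/-- `f ≤* g`: eventual domination. -/
def EvLE (f g : ℕ → ℕ) : Prop := ∀ᶠ n in Filter.atTop, f n ≤ g n

/-- The bounding number `𝔟`. -/
noncomputable def bNumber : Cardinal :=
  sInf { c | ∃ F : Set (ℕ → ℕ), Cardinal.mk F = c ∧ ¬ ∃ g : ℕ → ℕ, ∀ f ∈ F, EvLE f g }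

variable {X : Type} [TopologicalSpace X]

/-- `S` is an infinite set ("sequence") in `X \ {x}` converging to `x`. -/
def ConvergesTo (S : Set X) (x : X) : Prop :=
  S.Infinite ∧ x ∉ S ∧ ∀ U ∈ nhds x, (S \ U).Finite

/-- `X` has character `< 𝔟` at `x`. -/
def CharLtB (x : X) : Prop :=
  ∃ B : Set (Set X), Cardinal.mk B < bNumber ∧ (∀ U ∈ B, U ∈ nhds x) ∧
    ∀ V ∈ nhds x, ∃ U ∈ B, U ⊆ V

/-- Selection of a convergent transversal through a countable disjoint family of
sequences converging to `x`, in a countable crowded space of character `< 𝔟`. -/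
theorem exists_transversal_sequence [Countable X]
    (hcrowded : ∀ x : X, ¬ IsOpen ({x} : Set X))
    (hchar : ∀ x : X, CharLtB x)
    (x : X) (A : ℕ → Set X) (𝒴 : Set (Set X))
    (hconv : ∀ n, ConvergesTo (A n) x)
    (hdisj : Pairwise (Function.onFun Disjoint A))
    (h𝒴 : ∀ Y ∈ 𝒴, ∃ y : X, ConvergesTo Y y)
    (hAD : ∀ Y ∈ 𝒴, ∀ n, (Y ∩ A n).Finite)
    (hfew : ∀ Y ∈ 𝒴, {n | (Y ∩ A n).Nonempty}.Finite) :
    ∃ Y : Set X, ConvergesTo Y x ∧ Y ⊆ ⋃ n, A n ∧ ∀ n, ∃ y, Y ∩ A n = {y} := by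
  classical
  -- enumerate each `A n`
  have hA : ∀ n, ∃ a : ℕ → X, Function.Injective a ∧ ∀ k, a k ∈ A n := by
    intro n
    haveI : Infinite (A n) := (hconv n).1.to_subtype
    obtain ⟨e⟩ := nonempty_equiv_of_countable (α := A n) (β := ℕ)
    exact ⟨fun k => (e.symm k : X),
      fun i j h => e.symm.injective (Subtype.ext h), fun k => (e.symm k).2⟩
  choose a ainj amem using hA
  obtain ⟨B, hBcard, hBnhds, hBbase⟩ := hchar x
  -- for each neighbourhood, a modulus of convergence
  have key : ∀ U ∈ nhds x, ∀ n, ∃ m : ℕ, ∀ k ≥ m, a n k ∈ U := by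
    intro U hU n
    have hfin : {k | a n k ∉ U}.Finite := by
      have h1 : ((fun k => a n k) ⁻¹' (A n \ U)).Finite :=
        ((hconv n).2.2 U hU).preimage (ainj n).injOn
      exact h1.subset fun k hk => ⟨amem n k, hk⟩
    obtain ⟨m, hm⟩ := hfin.bddAbove
    refine ⟨m + 1, fun k hk => ?_⟩
    by_contra h
    have := hm h
    omega
  have key' : ∀ U : B, ∀ n, ∃ m : ℕ, ∀ k ≥ m, a n k ∈ (U : Set X) :=
    fun U n => key U (hBnhds U U.2) n
  choose f hf using key'
  -- the family `{f U : U ∈ B}` is bounded since `|B| < 𝔟`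
  have hbdd : ∃ g : ℕ → ℕ, ∀ h ∈ Set.range f, EvLE h g := by
    by_contra h'
    have hle : bNumber ≤ Cardinal.mk (Set.range f) :=
      csInf_le' ⟨Set.range f, rfl, h'⟩
    exact absurd (hle.trans Cardinal.mk_range_le) (not_le.2 hBcard)
  obtain ⟨g, hg⟩ := hbdd
  -- the transversal
  set Y : Set X := Set.range (fun n => a n (g n)) with hY
  have hmemA : ∀ n, a n (g n) ∈ A n := fun n => amem n (g n)
  have hinj : Function.Injective (fun n => a n (g n)) := by
    intro m n h
    simp only at h
    by_contra hmn
    exact (hdisj hmn).le_bot ⟨h ▸ hmemA m, hmemA n⟩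
  refine ⟨Y, ⟨Set.infinite_range_of_injective hinj, ?_, ?_⟩, ?_, ?_⟩
  · rintro ⟨n, hn⟩
    exact (hconv n).2.1 (hn ▸ hmemA n)
  · intro V hV
    obtain ⟨U, hUB, hUV⟩ := hBbase V hV
    have hev : EvLE (f ⟨U, hUB⟩) g := hg _ ⟨⟨U, hUB⟩, rfl⟩
    obtain ⟨N, hN⟩ := Filter.eventually_atTop.1 hev
    have hsub : Y \ V ⊆ (fun n => a n (g n)) '' {n | n < N} := by
      rintro y ⟨⟨m, rfl⟩, hyV⟩
      refine ⟨m, ?_, rfl⟩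
      by_contra hm
      simp only [Set.mem_setOf_eq, not_lt] at hm
      exact hyV (hUV (hf ⟨U, hUB⟩ m (g m) (hN m hm)))
    exact ((Set.finite_Iio N).image _).subset hsub
  · rintro y ⟨n, hn⟩
    exact Set.mem_iUnion.2 ⟨n, hn ▸ hmemA n⟩
  · intro n
    refine ⟨a n (g n), Set.eq_singleton_iff_unique_mem.2 ⟨⟨⟨n, rfl⟩, hmemA n⟩, ?_⟩⟩
    rintro y ⟨⟨m, rfl⟩, hyn⟩
    by_contra hne
    have hmn : m ≠ n := fun h => hne (by rw [h])
    exact (hdisj hmn).le_bot ⟨hmemA m, hyn⟩
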